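/- arXiv:1311.5573 — 2 statements merged into one kernel-verified Lean document; each statement's English description precedes it below -/
import Mathlib

section
/- Node normal form for 0-SLT grammars: every 0-SLT grammar G can be transformed into a 0-SLT grammar G'' in node normal form, i.e., one in which the right-hand side of every rule contains exactly one terminal symbol, such that val(G'')=val(G) and the size of G'' equals the size of G (the number of nonterminals may increase); moreover, in G'' every subtree of val(G'') rooted at a non-leaf node equals val(B) for some nonterminal B of G''. -/
/-- Trees over terminal labels `L`, nonterminals `N`, the leaf symbol `_`
(constructor `leaf`) and parameters `y_i` (constructor `param i`, 1-indexed).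
Terminal-labeled nodes have exactly two children; a nonterminal node has a
list of children (its length being constrained by `ArityOk`). -/
inductive PTree (L N : Type) where
  | leaf : PTree L N
  | param : ℕ → PTree L N
  | term : L → PTree L N → PTree L N → PTree L N
  | nt : N → List (PTree L N) → PTree L N

namespace PTree

variable {L N : Type}

/-- The pre-order list of parameter indices occurring in a tree. -/
def paramList : PTree L N → List ℕ
  | .leaf => []
  | .param i => [i]
  | .term _ l r => paramList l ++ paramList r
  | .nt _ ts => (ts.attach.map (fun t => paramList t.1)).flatten
decreasing_by
  all_goals simp_wf
  all_goals try omega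
  all_goals (have := List.sizeOf_lt_of_mem t.2; omega)

/-- The number of nodes of a tree. -/
def nodeCount : PTree L N → ℕ
  | .leaf => 1
  | .param _ => 1
  | .term _ l r => 1 + nodeCount l + nodeCount r
  | .nt _ ts => 1 + (ts.attach.map (fun t => nodeCount t.1)).sum
decreasing_by
  all_goals simp_wf
  all_goals try omega
  all_goals (have := List.sizeOf_lt_of_mem t.2; omega)

/-- Arities are respected: every nonterminal node labeled `A` has exactly
`rank A` children. -/
inductive ArityOk (rank : N → ℕ) : PTree L N → Prop
  | leaf : ArityOk rank .leaf
  | param (i : ℕ) : ArityOk rank (.param i)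
  | term (a : L) {l r : PTree L N} :
      ArityOk rank l → ArityOk rank r → ArityOk rank (.term a l r)
  | nt (A : N) {ts : List (PTree L N)} :
      ts.length = rank A → (∀ t ∈ ts, ArityOk rank t) → ArityOk rank (.nt A ts)

/-- `Occurs B t` holds iff the nonterminal `B` occurs somewhere in `t`. -/
inductive Occurs (B : N) : PTree L N → Prop
  | here (ts : List (PTree L N)) : Occurs B (.nt B ts)
  | nt (A : N) {ts : List (PTree L N)} {t : PTree L N} :
      t ∈ ts → Occurs B t → Occurs B (.nt A ts)
  | term_left (a : L) {l r : PTree L N} : Occurs B l → Occurs B (.term a l r)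
  | term_right (a : L) {l r : PTree L N} : Occurs B r → Occurs B (.term a l r)

/-- Ground trees: binary trees built from terminal symbols and `_`-leaves only
(no nonterminals, no parameters). -/
inductive Ground : PTree L N → Prop
  | leaf : Ground .leaf
  | term (a : L) {l r : PTree L N} : Ground l → Ground r → Ground (.term a l r)

/-- Substitution of the parameters `y_1, …, y_k` by the trees of `env`
(`y_i` is replaced by the `i`-th entry of `env`). -/
def subst (env : List (PTree L N)) : PTree L N → PTree L N
  | .leaf => .leaf
  | .param i => env.getD (i - 1) .leaf
  | .term a l r => .term a (subst env l) (subst env r)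
  | .nt B ts => .nt B (ts.attach.map (fun t => subst env t.1))
decreasing_by
  all_goals simp_wf
  all_goals try omega
  all_goals (have := List.sizeOf_lt_of_mem t.2; omega)

end PTree

open PTree in
/-- A straight-line (linear) tree grammar `G = (N, S, P)`:
each nonterminal `A` of rank `k` has exactly one production `A → P A`, in whose
right-hand side the parameters `y_1, …, y_k` occur exactly once each and
in this order in pre-order, all arities are respected, and the hierarchical
order `H_G = {(A, B) | B occurs in P A}` is acyclic. -/
structure SLT (L N : Type) where
  rank : N → ℕ
  start : N
  P : N → PTree L N
  rank_start : rank start = 0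
  arity : ∀ A, ArityOk rank (P A)
  params : ∀ A, paramList (P A) = List.range' 1 (rank A)
  acyclic : ∀ A, ¬ Relation.TransGen (fun X Y => Occurs Y (P X)) A A

namespace SLT

variable {L N : Type}

/-- One derivation step: replace one occurrence of a subtree `A(t_1, …, t_k)`
(`A` a nonterminal) by `P A` with each parameter `y_i` replaced by `t_i`. -/
inductive Rw (G : SLT L N) : PTree L N → PTree L N → Prop
  | head (A : N) (ts : List (PTree L N)) :
      Rw G (.nt A ts) (PTree.subst ts (G.P A))
  | term_left {l l' : PTree L N} (a : L) (r : PTree L N) :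
      Rw G l l' → Rw G (.term a l r) (.term a l' r)
  | term_right {r r' : PTree L N} (a : L) (l : PTree L N) :
      Rw G r r' → Rw G (.term a l r) (.term a l r')
  | nt_child {t t' : PTree L N} (B : N) (u v : List (PTree L N)) :
      Rw G t t' → Rw G (.nt B (u ++ t :: v)) (.nt B (u ++ t' :: v))

/-- The size of a grammar: the sum of the numbers of edges of all
right-hand sides. -/
def size [Fintype N] (G : SLT L N) : ℕ :=
  ∑ A : N, (PTree.nodeCount (G.P A) - 1)

end SLT

namespace PTree

variable {L N : Type}

/-- The subtree of a (ground) tree rooted at a position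
(`false` = left child, `true` = right child). -/
def subtreeAt : PTree L N → List Bool → PTree L N
  | t, [] => t
  | .term _ l r, b :: p => subtreeAt (if b then r else l) p
  | t, _ :: _ => t

/-- Whether a position is a node of a (ground) tree. -/
def ValidPos : PTree L N → List Bool → Prop
  | _, [] => True
  | .term _ l r, b :: p => ValidPos (if b then r else l) p
  | _, _ :: _ => False

end PTree

/-- Strict pre-order (document order) on positions of a binary tree: `u`
comes before `v` iff `u` is a proper prefix (ancestor) of `v`, or `u` lies in
the left subtree and `v` in the right subtree of their common ancestor. -/
def preLt (u v : List Bool) : Prop :=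
  (u <+: v ∧ u ≠ v) ∨ ∃ w x y, u = w ++ false :: x ∧ v = w ++ true :: y

namespace PTree

variable {L N : Type}

/-- The number of terminal symbols occurring in a right-hand side
(`_`-leaves, parameters and nonterminals do not count). -/
def termCount : PTree L N → ℕ
  | .leaf => 0
  | .param _ => 0
  | .term _ l r => 1 + termCount l + termCount r
  | .nt _ ts => (ts.attach.map (fun t => termCount t.1)).sum
decreasing_by
  all_goals simp_wf
  all_goals try omega
  all_goals (have := List.sizeOf_lt_of_mem t.2; omega)

/-- Retype a ground tree over another nonterminal alphabet (ground trees
contain no nonterminals and no parameters, so this is the identity on the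
trees we care about). -/
def retype {M : Type} : PTree L N → PTree L M
  | .leaf => .leaf
  | .param i => .param i
  | .term a l r => .term a (retype l) (retype r)
  | .nt _ _ => .leaf

end PTree

/-!
The tree `T` derived by a 0-SLT grammar is the only ground tree it derives, and every subtree
of `T` rooted at a terminal node is the value of a terminal-rooted subtree of some right-hand
side. Hence `T` has at most `s = ∑ A, termCount (P A)` distinct terminal-rooted subtrees. Give
each of them a nonterminal whose rule is its root terminal applied to its two children, a child
being replaced by its own nonterminal unless it is `_`. Padding with dummy rules `a(_, _)` gives
exactly `s` rules of two edges each, i.e. size `2 s`, which is also the size of the original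
grammar, since a rank-`0` right-hand side with `k` terminals has `2 k` edges.
-/

theorem not_transGen_self_of_measure_lt {α : Type*} {r : α → α → Prop} (f : α → ℕ)
    (hf : ∀ a b, r a b → f b < f a) (a : α) : ¬ Relation.TransGen r a a := by
  intro h
  have := Relation.TransGen.lift (p := fun m n : ℕ => n < m) f hf a a h
  rw [Relation.transGen_eq_self] at this
  exact lt_irrefl _ this

namespace PTree

variable {L N : Type}

theorem subst_eq_self_of_paramList_eq_nil (env : List (PTree L N)) :
    ∀ t : PTree L N, paramList t = [] → subst env t = t
  | .leaf, _ => by simp [subst]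
  | .param i, h => by simp [paramList] at h
  | .term a l r, h => by
      simp only [paramList, List.append_eq_nil_iff] at h
      simp [subst, subst_eq_self_of_paramList_eq_nil env l h.1,
        subst_eq_self_of_paramList_eq_nil env r h.2]
  | .nt B ts, h => by
      simp only [paramList, List.flatten_eq_nil_iff, List.mem_map] at h
      simp only [subst, PTree.nt.injEq, true_and]
      conv_rhs => rw [← List.attach_map_subtype_val ts]
      exact List.map_congr_left fun t _ =>
        subst_eq_self_of_paramList_eq_nil env t.1 (h _ ⟨t, List.mem_attach _ _, rfl⟩)
decreasing_by
  all_goals simp_wf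
  all_goals try omega
  all_goals (have := List.sizeOf_lt_of_mem t.2; omega)

/-- Such a tree is a full binary tree whose internal nodes are its terminals. -/
theorem nodeCount_eq_two_mul_termCount_add_one {rank : N → ℕ} (h0 : ∀ A, rank A = 0)
    {t : PTree L N} (ht : ArityOk rank t) (hp : paramList t = []) :
    nodeCount t = 2 * termCount t + 1 := by
  induction ht with
  | leaf => simp [nodeCount, termCount]
  | param i => simp [paramList] at hp
  | term a _ _ ihl ihr =>
      simp only [paramList, List.append_eq_nil_iff] at hp
      simp only [nodeCount, termCount, ihl hp.1, ihr hp.2]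
      ring
  | nt A hlen _ _ =>
      obtain rfl : _ = [] := List.length_eq_zero_iff.mp (hlen.trans (h0 A))
      simp [nodeCount, termCount]

/-- Parameters are sent to `_`; `expand` is only applied to parameter-free trees. -/
def expand (g : N → PTree L N) : PTree L N → PTree L N
  | .leaf => .leaf
  | .param _ => .leaf
  | .term a l r => .term a (expand g l) (expand g r)
  | .nt A _ => g A

theorem expand_congr {g g' : N → PTree L N} :
    ∀ t : PTree L N, (∀ B, Occurs B t → g B = g' B) → expand g t = expand g' t
  | .leaf, _ | .param _, _ => rfl
  | .term a l r, h => by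
      rw [expand, expand, expand_congr l fun B hB => h B (.term_left a hB),
        expand_congr r fun B hB => h B (.term_right a hB)]
  | .nt A ts, h => h A (.here ts)

theorem ground_expand {g : N → PTree L N} :
    ∀ t : PTree L N, (∀ B, Occurs B t → Ground (g B)) → Ground (expand g t)
  | .leaf, _ | .param _, _ => .leaf
  | .term a l r, h =>
      .term a (ground_expand l fun B hB => h B (.term_left a hB))
        (ground_expand r fun B hB => h B (.term_right a hB))
  | .nt A _, h => h A (.here _)

theorem Ground.exists_eq_term {t : PTree L N} (ht : Ground t) (hne : t ≠ .leaf) :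
    ∃ a l r, t = .term a l r := by
  cases ht with
  | leaf => exact absurd rfl hne
  | term a _ _ => exact ⟨a, _, _, rfl⟩

theorem expand_eq_self_of_ground (g : N → PTree L N) {t : PTree L N} (ht : Ground t) :
    expand g t = t := by
  induction ht with
  | leaf => rfl
  | term a _ _ ihl ihr => rw [expand, ihl, ihr]

def termSubtrees : PTree L N → List (PTree L N)
  | .term a l r => .term a l r :: (termSubtrees l ++ termSubtrees r)
  | _ => []

theorem mem_termSubtrees_self (a : L) (l r : PTree L N) :
    .term a l r ∈ termSubtrees (.term a l r) := by
  simp [termSubtrees]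

theorem termSubtrees_left_subset (a : L) (l r : PTree L N) :
    termSubtrees l ⊆ termSubtrees (.term a l r) := by
  intro x hx
  simp [termSubtrees, hx]

theorem termSubtrees_right_subset (a : L) (l r : PTree L N) :
    termSubtrees r ⊆ termSubtrees (.term a l r) := by
  intro x hx
  simp [termSubtrees, hx]

theorem termSubtrees_subset_of_mem {x : PTree L N} :
    ∀ {T : PTree L N}, x ∈ termSubtrees T → termSubtrees x ⊆ termSubtrees T
  | .term a l r, hx => by
      simp only [termSubtrees, List.mem_cons, List.mem_append] at hx
      rcases hx with rfl | hx | hx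
      · exact List.Subset.refl _
      · exact List.Subset.trans (termSubtrees_subset_of_mem hx) (termSubtrees_left_subset a l r)
      · exact List.Subset.trans (termSubtrees_subset_of_mem hx) (termSubtrees_right_subset a l r)
  | .leaf, hx | .param _, hx | .nt _ _, hx => by simp [termSubtrees] at hx

theorem exists_eq_term_of_mem_termSubtrees {x : PTree L N} :
    ∀ {T : PTree L N}, x ∈ termSubtrees T → ∃ a l r, x = .term a l r
  | .term a l r, hx => by
      simp only [termSubtrees, List.mem_cons, List.mem_append] at hx
      rcases hx with rfl | hx | hx
      exacts [⟨a, l, r, rfl⟩, exists_eq_term_of_mem_termSubtrees hx,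
        exists_eq_term_of_mem_termSubtrees hx]
  | .leaf, hx | .param _, hx | .nt _ _, hx => by simp [termSubtrees] at hx

theorem Ground.of_mem_termSubtrees {T x : PTree L N} (hT : Ground T)
    (hx : x ∈ termSubtrees T) : Ground x := by
  induction hT with
  | leaf => simp [termSubtrees] at hx
  | term a hl hr ihl ihr =>
      simp only [termSubtrees, List.mem_cons, List.mem_append] at hx
      rcases hx with rfl | hx | hx
      exacts [.term a hl hr, ihl hx, ihr hx]

theorem length_termSubtrees_le_termCount :
    ∀ t : PTree L N, (termSubtrees t).length ≤ termCount t
  | .term a l r => by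
      have := length_termSubtrees_le_termCount l
      have := length_termSubtrees_le_termCount r
      simp only [termSubtrees, termCount, List.length_cons, List.length_append]
      omega
  | .leaf | .param _ | .nt _ _ => by simp [termSubtrees]

theorem termSubtrees_subtreeAt_subset :
    ∀ {T : PTree L N} {p : List Bool}, ValidPos T p →
      termSubtrees (subtreeAt T p) ⊆ termSubtrees T
  | _, [], _ => List.Subset.refl _
  | .term a l r, true :: _, hp =>
      List.Subset.trans (termSubtrees_subtreeAt_subset (T := r) hp)
        (termSubtrees_right_subset a l r)
  | .term a l r, false :: _, hp =>
      List.Subset.trans (termSubtrees_subtreeAt_subset (T := l) hp)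
        (termSubtrees_left_subset a l r)
  | .leaf, _ :: _, hp | .param _, _ :: _, hp | .nt _ _, _ :: _, hp => hp.elim

theorem termSubtrees_expand_subset (g : N → PTree L N) (S : List (PTree L N)) :
    ∀ t : PTree L N, (∀ B, Occurs B t → termSubtrees (g B) ⊆ S) →
      termSubtrees (expand g t) ⊆ (termSubtrees t).map (expand g) ++ S
  | .leaf, _ | .param _, _ => by simp [expand, termSubtrees]
  | .term a l r, h => by
      have hl := termSubtrees_expand_subset g S l fun B hB => h B (.term_left a hB)
      have hr := termSubtrees_expand_subset g S r fun B hB => h B (.term_right a hB)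
      intro x hx
      simp only [expand, termSubtrees, List.mem_cons, List.mem_append] at hx
      simp only [termSubtrees, List.map_cons, List.map_append, List.mem_cons, List.mem_append]
      rcases hx with rfl | hx | hx
      · exact Or.inl (Or.inl rfl)
      · rcases List.mem_append.mp (hl hx) with h | h
        exacts [Or.inl (Or.inr (Or.inl h)), Or.inr h]
      · rcases List.mem_append.mp (hr hx) with h | h
        exacts [Or.inl (Or.inr (Or.inr h)), Or.inr h]
  | .nt B ts, h => List.Subset.trans (h B (.here ts)) (List.subset_append_right _ _)

end PTree

namespace SLT

open PTree Relation

variable {L N : Type} (G : SLT L N)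

theorem paramList_P_eq_nil (h0 : ∀ A, G.rank A = 0) (A : N) : paramList (G.P A) = [] := by
  rw [G.params A, h0 A, List.range'_zero]

theorem rw_nt (h0 : ∀ A, G.rank A = 0) (A : N) (ts : List (PTree L N)) :
    G.Rw (.nt A ts) (G.P A) := by
  simpa only [subst_eq_self_of_paramList_eq_nil ts _ (G.paramList_P_eq_nil h0 A)]
    using Rw.head (G := G) A ts

theorem reflTransGen_rw_term {a : L} {l l' r r' : PTree L N}
    (hl : ReflTransGen G.Rw l l') (hr : ReflTransGen G.Rw r r') :
    ReflTransGen G.Rw (.term a l r) (.term a l' r') :=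
  (hl.lift (fun x => PTree.term a x r) fun _ _ => Rw.term_left a r).trans
    (hr.lift (fun x => PTree.term a l' x) fun _ _ => Rw.term_right a l')

theorem size_eq_two_mul_sum_termCount [Fintype N] (h0 : ∀ A, G.rank A = 0) :
    G.size = 2 * ∑ A, termCount (G.P A) := by
  rw [size, Finset.mul_sum]
  refine Finset.sum_congr rfl fun A _ => ?_
  rw [nodeCount_eq_two_mul_termCount_add_one h0 (G.arity A) (G.paramList_P_eq_nil h0 A)]
  omega

variable [Finite N]

theorem wellFounded_occurs : WellFounded fun B A => Occurs B (G.P A) := by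
  have : Std.Irrefl (TransGen fun B A => Occurs B (G.P A)) :=
    ⟨fun A hA => G.acyclic A (by rwa [← transGen_swap] at hA)⟩
  exact (Finite.wellFounded_of_trans_of_irrefl (TransGen fun B A => Occurs B (G.P A))).mono
    fun _ _ h => TransGen.single h

open Classical in
/-- The tree derived from `A`. Arguments of nonterminals are discarded, so this is `val A`
only when all ranks are `0`. -/
noncomputable def val : N → PTree L N :=
  G.wellFounded_occurs.fix fun A ih =>
    expand (fun B => if h : Occurs B (G.P A) then ih B h else .leaf) (G.P A)

theorem val_eq (A : N) : G.val A = expand G.val (G.P A) := by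
  rw [val, WellFounded.fix_eq]
  exact expand_congr _ fun B hB => dif_pos hB

theorem ground_val (A : N) : Ground (G.val A) := by
  induction A using G.wellFounded_occurs.induction with
  | _ A ih => rw [val_eq]; exact ground_expand _ ih

variable {G}

theorem Rw.expand_val_eq (h0 : ∀ A, G.rank A = 0) {t t' : PTree L N} (h : G.Rw t t') :
    expand G.val t = expand G.val t' := by
  induction h with
  | head A ts =>
      rw [subst_eq_self_of_paramList_eq_nil ts _ (G.paramList_P_eq_nil h0 A), ← val_eq]
      rfl
  | term_left a r _ ih | term_right a r _ ih => simp only [expand, ih]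
  | nt_child => rfl

theorem expand_val_eq_of_reflTransGen (h0 : ∀ A, G.rank A = 0) {t t' : PTree L N}
    (h : ReflTransGen G.Rw t t') : expand G.val t = expand G.val t' := by
  induction h with
  | refl => rfl
  | tail _ h ih => rw [ih, h.expand_val_eq h0]

theorem reflTransGen_expand_val (h0 : ∀ A, G.rank A = 0) :
    ∀ t : PTree L N, paramList t = [] →
      (∀ B, Occurs B t → ReflTransGen G.Rw (G.P B) (G.val B)) →
      ReflTransGen G.Rw t (expand G.val t)
  | .leaf, _, _ => .refl
  | .param i, hp, _ => by simp [paramList] at hp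
  | .term a l r, hp, h => by
      simp only [paramList, List.append_eq_nil_iff] at hp
      exact reflTransGen_rw_term G
        (reflTransGen_expand_val h0 l hp.1 fun B hB => h B (.term_left a hB))
        (reflTransGen_expand_val h0 r hp.2 fun B hB => h B (.term_right a hB))
  | .nt B ts, _, h => .head (G.rw_nt h0 B ts) (h B (.here ts))

theorem reflTransGen_P_val (h0 : ∀ A, G.rank A = 0) (A : N) :
    ReflTransGen G.Rw (G.P A) (G.val A) := by
  induction A using G.wellFounded_occurs.induction with
  | _ A ih =>
      rw [val_eq]
      exact reflTransGen_expand_val h0 _ (G.paramList_P_eq_nil h0 A) ih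

theorem eq_val_start_of_reflTransGen (h0 : ∀ A, G.rank A = 0) {t : PTree L N}
    (ht : Ground t) (h : ReflTransGen G.Rw (G.P G.start) t) : t = G.val G.start := by
  rw [← expand_eq_self_of_ground G.val ht, ← expand_val_eq_of_reflTransGen h0 h, ← val_eq]

variable (G) [Fintype N]

/-- Every terminal-rooted subtree of some `val A` is the value of a terminal-rooted subtree
of a right-hand side (`termSubtrees_val_subset`), hence there are at most
`∑ A, termCount (G.P A)` distinct ones. -/
noncomputable def rhsSubtreeVals : List (PTree L N) :=
  Finset.univ.toList.flatMap fun A => (termSubtrees (G.P A)).map (expand G.val)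

theorem termSubtrees_val_subset (A : N) : termSubtrees (G.val A) ⊆ G.rhsSubtreeVals := by
  induction A using G.wellFounded_occurs.induction with
  | _ A ih =>
      rw [val_eq]
      intro x hx
      rcases List.mem_append.mp (termSubtrees_expand_subset _ _ _ ih hx) with h | h
      · exact List.mem_flatMap.mpr ⟨A, Finset.mem_toList.mpr (Finset.mem_univ A), h⟩
      · exact h

theorem length_rhsSubtreeVals_le : G.rhsSubtreeVals.length ≤ ∑ A, termCount (G.P A) := by
  rw [rhsSubtreeVals, List.length_flatMap, ← Finset.sum_map_toList]
  exact List.sum_le_sum fun A _ => by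
    rw [List.length_map]
    exact length_termSubtrees_le_termCount _

theorem length_dedup_termSubtrees_val_le [DecidableEq (PTree L N)] (A : N) :
    (termSubtrees (G.val A)).dedup.length ≤ ∑ B, termCount (G.P B) :=
  ((List.subperm_of_subset (List.nodup_dedup _) fun _ hx =>
    G.termSubtrees_val_subset A (List.mem_dedup.mp hx)).length_le).trans
    G.length_rhsSubtreeVals_le

end SLT

namespace NodeNormalForm

open PTree Relation

variable {L N : Type} [DecidableEq (PTree L N)] (T : PTree L N) (s : ℕ)

/-- Nonterminal `i` stands for the `i`-th distinct terminal-rooted subtree of `T`; the indices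
beyond those stand for `_` and get a dummy rule, which pads the grammar to exactly `s`
nonterminals. -/
def treeAt (i : Fin s) : PTree L N := (termSubtrees T).dedup.getD i .leaf

def index [NeZero s] (x : PTree L N) : Fin s :=
  Fin.ofNat s ((termSubtrees T).dedup.idxOf x)

def ref [NeZero s] : PTree L N → PTree L (Fin s)
  | .term a l r => .nt (index T s (.term a l r)) []
  | _ => .leaf

def rule [NeZero s] (a₀ : L) : PTree L N → PTree L (Fin s)
  | .term a l r => .term a (ref T s l) (ref T s r)
  | _ => .term a₀ .leaf .leaf

variable {T s}

theorem treeAt_index [NeZero s] (hlen : (termSubtrees T).dedup.length ≤ s)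
    {x : PTree L N} (hx : x ∈ termSubtrees T) : treeAt T s (index T s x) = x := by
  have hlt : (termSubtrees T).dedup.idxOf x < (termSubtrees T).dedup.length :=
    List.idxOf_lt_length_iff.mpr (List.mem_dedup.mpr hx)
  rw [treeAt, index, Fin.val_ofNat, Nat.mod_eq_of_lt (hlt.trans_le hlen),
    List.getD_eq_getElem _ _ hlt, List.getElem_idxOf]

theorem mem_termSubtrees_of_treeAt_eq {i : Fin s} {a : L} {l r : PTree L N}
    (h : treeAt T s i = .term a l r) : .term a l r ∈ termSubtrees T := by
  rw [treeAt] at h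
  by_cases hi : i.1 < (termSubtrees T).dedup.length
  · rw [List.getD_eq_getElem _ _ hi] at h
    exact List.mem_dedup.mp (h ▸ List.getElem_mem hi)
  · rw [List.getD_eq_default _ _ (not_lt.mp hi)] at h
    cases h

variable [NeZero s]

theorem exists_eq_term_of_occurs_ref {B : Fin s} {c : PTree L N}
    (h : Occurs B (ref T s c)) : ∃ a l r, c = .term a l r ∧ B = index T s c := by
  cases c with
  | term a l r =>
      refine ⟨a, l, r, rfl, ?_⟩
      cases h with
      | here => rfl
      | nt _ hmem _ => simp at hmem
  | leaf | param _ | nt _ _ => cases h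

theorem paramList_rule (a₀ : L) (x : PTree L N) : paramList (rule T s a₀ x) = [] := by
  have hc : ∀ c : PTree L N, paramList (ref T s c) = [] := by
    intro c; cases c <;> simp [ref, paramList]
  cases x <;> simp [rule, paramList, hc]

theorem termCount_rule (a₀ : L) (x : PTree L N) : termCount (rule T s a₀ x) = 1 := by
  have hc : ∀ c : PTree L N, termCount (ref T s c) = 0 := by
    intro c; cases c <;> simp [ref, termCount]
  cases x <;> simp [rule, termCount, hc]

theorem arityOk_rule (a₀ : L) (x : PTree L N) :
    ArityOk (fun _ : Fin s => 0) (rule T s a₀ x) := by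
  have hc : ∀ c : PTree L N, ArityOk (fun _ : Fin s => 0) (ref T s c) := by
    intro c
    cases c
    case term => exact .nt _ rfl (by simp)
    all_goals exact .leaf
  cases x
  case term => exact .term _ (hc _) (hc _)
  all_goals exact .term _ .leaf .leaf

theorem nodeCount_treeAt_lt_of_occurs (hlen : (termSubtrees T).dedup.length ≤ s) (a₀ : L)
    {A B : Fin s} (h : Occurs B (rule T s a₀ (treeAt T s A))) :
    nodeCount (treeAt T s B) < nodeCount (treeAt T s A) := by
  generalize hA : treeAt T s A = x at h ⊢
  cases x with
  | term a l r =>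
      have hsub := termSubtrees_subset_of_mem (mem_termSubtrees_of_treeAt_eq hA)
      have hchild : ∀ c, termSubtrees c ⊆ termSubtrees (.term a l r) →
          Occurs B (ref T s c) → treeAt T s B = c := by
        intro c hc hocc
        obtain ⟨a', l', r', rfl, rfl⟩ := exists_eq_term_of_occurs_ref hocc
        exact treeAt_index hlen (hsub (hc (mem_termSubtrees_self a' l' r')))
      rw [nodeCount]
      cases h with
      | term_left _ h => rw [hchild l (termSubtrees_left_subset a l r) h]; omega
      | term_right _ h => rw [hchild r (termSubtrees_right_subset a l r) h]; omega
  | leaf | param _ | nt _ _ =>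
      cases h with
      | term_left _ h | term_right _ h => cases h

variable (T s) in
def grammar (a₀ : L) (hlen : (termSubtrees T).dedup.length ≤ s) : SLT L (Fin s) where
  rank _ := 0
  start := index T s T
  P i := rule T s a₀ (treeAt T s i)
  rank_start := rfl
  arity _ := arityOk_rule a₀ _
  params _ := paramList_rule a₀ _
  acyclic := not_transGen_self_of_measure_lt (fun i => nodeCount (treeAt T s i))
    fun _ _ => nodeCount_treeAt_lt_of_occurs hlen a₀

variable {a₀ : L} (hlen : (termSubtrees T).dedup.length ≤ s)

theorem size_grammar : (grammar T s a₀ hlen).size = 2 * s := by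
  rw [SLT.size_eq_two_mul_sum_termCount _ fun _ => rfl]
  simp [grammar, termCount_rule]

theorem grammar_P_index {x : PTree L N} (hx : x ∈ termSubtrees T) :
    (grammar T s a₀ hlen).P (index T s x) = rule T s a₀ x :=
  congrArg (rule T s a₀) (treeAt_index hlen hx)

theorem reflTransGen_ref_retype {x : PTree L N} (hx : Ground x)
    (hxT : termSubtrees x ⊆ termSubtrees T) :
    ReflTransGen (grammar T s a₀ hlen).Rw (ref T s x) x.retype := by
  induction hx with
  | leaf => exact .refl
  | term a _ _ ihl ihr =>
      refine .head ((grammar T s a₀ hlen).rw_nt (fun _ => rfl) _ []) ?_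
      rw [grammar_P_index hlen (hxT (mem_termSubtrees_self _ _ _))]
      exact SLT.reflTransGen_rw_term _
        (ihl (List.Subset.trans (termSubtrees_left_subset _ _ _) hxT))
        (ihr (List.Subset.trans (termSubtrees_right_subset _ _ _) hxT))

theorem reflTransGen_P_index_retype (hT : Ground T) {x : PTree L N}
    (hx : x ∈ termSubtrees T) :
    ReflTransGen (grammar T s a₀ hlen).Rw ((grammar T s a₀ hlen).P (index T s x)) x.retype := by
  obtain ⟨a, l, r, rfl⟩ := exists_eq_term_of_mem_termSubtrees hx
  have hsub := termSubtrees_subset_of_mem hx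
  obtain _ | ⟨_, hl, hr⟩ := hT.of_mem_termSubtrees hx
  rw [grammar_P_index hlen hx]
  exact SLT.reflTransGen_rw_term _
    (reflTransGen_ref_retype hlen hl (List.Subset.trans (termSubtrees_left_subset _ _ _) hsub))
    (reflTransGen_ref_retype hlen hr (List.Subset.trans (termSubtrees_right_subset _ _ _) hsub))

end NodeNormalForm

open PTree NodeNormalForm in
/-- Node normal form for 0-SLT grammars: every 0-SLT grammar
`G` (whose derived tree is not the single leaf `_`) can be transformed into a
0-SLT grammar `G''` in node normal form — the right-hand side of every rule
contains exactly one terminal symbol — such that `G''` derives the same tree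
and has exactly the same size as `G` (the number of nonterminals may
increase), and every subtree of the derived tree rooted at a non-leaf node is
the tree derived from some nonterminal `B` of `G''`. -/
theorem node_normal_form (L N : Type) [Fintype N] (G : SLT L N)
    (h0 : ∀ A, G.rank A = 0)
    (hnontriv : ∀ t : PTree L N, PTree.Ground t →
      Relation.ReflTransGen (SLT.Rw G) (G.P G.start) t → t ≠ PTree.leaf) :
    ∃ (m : ℕ) (G'' : SLT L (Fin m)),
      (∀ B, G''.rank B = 0) ∧
      (∀ B, PTree.termCount (G''.P B) = 1) ∧
      SLT.size G'' = SLT.size G ∧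
      ∀ t : PTree L N, PTree.Ground t →
        Relation.ReflTransGen (SLT.Rw G) (G.P G.start) t →
        Relation.ReflTransGen (SLT.Rw G'') (G''.P G''.start) t.retype ∧
        ∀ p : List Bool, PTree.ValidPos t p →
          (∃ (a : L) (l r : PTree L N), t.subtreeAt p = PTree.term a l r) →
          ∃ B : Fin m,
            Relation.ReflTransGen (SLT.Rw G'') (PTree.nt B [])
              (t.subtreeAt p).retype := by
  classical
  have hT := G.ground_val G.start
  have hreach := SLT.reflTransGen_P_val h0 G.start
  obtain ⟨a₀, l₀, r₀, hT_eq⟩ := hT.exists_eq_term (hnontriv _ hT hreach)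
  have hT_mem : G.val G.start ∈ termSubtrees (G.val G.start) := by
    rw [hT_eq]; exact mem_termSubtrees_self a₀ l₀ r₀
  have hlen := G.length_dedup_termSubtrees_val_le G.start
  have : NeZero (∑ A, termCount (G.P A)) :=
    ⟨((List.length_pos_of_mem (List.mem_dedup.mpr hT_mem)).trans_le hlen).ne'⟩
  refine ⟨_, grammar _ _ a₀ hlen, fun _ => rfl, fun _ => termCount_rule a₀ _, ?_, ?_⟩
  · rw [size_grammar, G.size_eq_two_mul_sum_termCount h0]
  intro t ht hreach_t
  obtain rfl := SLT.eq_val_start_of_reflTransGen h0 ht hreach_t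
  refine ⟨reflTransGen_P_index_retype hlen ht hT_mem, fun p hp ⟨a, l, r, hp_term⟩ => ?_⟩
  have hmem : (G.val G.start).subtreeAt p ∈ termSubtrees (G.val G.start) :=
    termSubtrees_subtreeAt_subset hp (hp_term ▸ mem_termSubtrees_self a l r)
  exact ⟨_, .head (SLT.rw_nt _ (fun _ => rfl) _ [])
    (reflTransGen_P_index_retype hlen ht hmem)⟩
end

section
/- Annotation of an SLT grammar by a deterministic bottom-up tree automaton: given a deterministic bottom-up tree automaton B with state set Q over binary trees and a k-SLT grammar G (an SLT grammar whose nonterminals have rank at most k), there exists an SLT grammar of size O(|Q|^{k+1}·|G|) whose value is the tree val(G) in which every node is additionally annotated with the state that B reaches at that node in its unique run on val(G). -/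
/-- A deterministic bottom-up tree automaton over binary trees: a state
assigned to the leaf symbol `_`, and a transition function mapping each
triple (label, state of left child, state of right child) to a state. -/
structure DBU (L Q : Type) where
  leafState : Q
  delta : L → Q → Q → Q

namespace DBU

variable {L Q N : Type}

/-- The state reached at the root of a (ground) tree in the unique bottom-up
run. -/
def run (B : DBU L Q) : PTree L N → Q
  | .leaf => B.leafState
  | .param _ => B.leafState
  | .term a l r => B.delta a (run B l) (run B r)
  | .nt _ _ => B.leafState

/-- Annotate every node of a (ground) tree with the state that the unique
bottom-up run of `B` reaches at that node (the `_`-leaves all carry the leaf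
state and stay unannotated). -/
def annotate {M : Type} (B : DBU L Q) : PTree L N → PTree (L × Q) M
  | .leaf => .leaf
  | .param i => .param i
  | .term a l r =>
      .term (a, B.delta a (run B l) (run B r)) (annotate B l) (annotate B r)
  | .nt _ _ => .leaf

end DBU

/-!
Given the states `q ∈ Q^k` of the arguments of a nonterminal `A`, the state that `B` reaches
at the root of the tree derived from `A` is determined; these summaries exist by recursion
along the acyclic hierarchical order. The annotated grammar has a copy `(A, q)` of every
nonterminal, whose right-hand side is that of `A` with each terminal node labelled by its
state under the summaries and each nonterminal occurrence `C(t₁, …, tᵣ)` renamed to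
`(C, states of the tᵢ)`. Every derivation step of `G` is mirrored by one step of the new
grammar, and each rule is copied `|Q|^k` times.
-/

namespace PTree

variable {L N : Type}

@[elab_as_elim, induction_eliminator]
theorem induction {motive : PTree L N → Prop} (leaf : motive .leaf)
    (param : ∀ i, motive (.param i))
    (term : ∀ a l r, motive l → motive r → motive (.term a l r))
    (nt : ∀ A ts, (∀ t ∈ ts, motive t) → motive (.nt A ts)) : ∀ t, motive t
  | .leaf => leaf
  | .param i => param i
  | .term a l r => term a l r (induction leaf param term nt l) (induction leaf param term nt r)
  | .nt A ts => nt A ts fun t _ => induction leaf param term nt t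

@[simp] lemma subst_leaf (env : List (PTree L N)) : subst env .leaf = .leaf := by
  simp [subst]

@[simp] lemma subst_param (env : List (PTree L N)) (i : ℕ) :
    subst env (.param i) = env.getD (i - 1) .leaf := by
  simp [subst]

@[simp] lemma subst_term (env : List (PTree L N)) (a : L) (l r : PTree L N) :
    subst env (.term a l r) = .term a (subst env l) (subst env r) := by
  simp [subst]

@[simp] lemma subst_nt (env : List (PTree L N)) (A : N) (ts : List (PTree L N)) :
    subst env (.nt A ts) = .nt A (ts.map (subst env)) := by
  simp [subst]

@[simp] lemma paramList_leaf : paramList (.leaf : PTree L N) = [] := by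
  simp [paramList]

@[simp] lemma paramList_param (i : ℕ) : paramList (.param i : PTree L N) = [i] := by
  simp [paramList]

@[simp] lemma paramList_term (a : L) (l r : PTree L N) :
    paramList (.term a l r) = paramList l ++ paramList r := by
  simp [paramList]

@[simp] lemma paramList_nt (A : N) (ts : List (PTree L N)) :
    paramList (.nt A ts) = (ts.map paramList).flatten := by
  simp [paramList]

@[simp] lemma nodeCount_leaf : nodeCount (.leaf : PTree L N) = 1 := by
  simp [nodeCount]

@[simp] lemma nodeCount_param (i : ℕ) : nodeCount (.param i : PTree L N) = 1 := by
  simp [nodeCount]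

@[simp] lemma nodeCount_term (a : L) (l r : PTree L N) :
    nodeCount (.term a l r) = 1 + nodeCount l + nodeCount r := by
  simp [nodeCount]

@[simp] lemma nodeCount_nt (A : N) (ts : List (PTree L N)) :
    nodeCount (.nt A ts) = 1 + (ts.map nodeCount).sum := by
  simp [nodeCount]

end PTree

namespace SLT

variable {L N : Type}

theorem wellFounded_occurs_s13 [Finite N] (G : SLT L N) :
    WellFounded fun X Y => PTree.Occurs X (G.P Y) := by
  let r : N → N → Prop := fun X Y => PTree.Occurs X (G.P Y)
  have : Std.Irrefl (Relation.TransGen r) := ⟨fun A h => G.acyclic A h.swap⟩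
  exact Subrelation.wf (fun h => Relation.TransGen.single h)
    (Finite.wellFounded_of_trans_of_irrefl (Relation.TransGen r))

end SLT

namespace DBU

open PTree

variable {L Q N M : Type} (B : DBU L Q) {k : ℕ}

def listEnv (qs : List Q) (j : ℕ) : Q :=
  qs.getD j B.leafState

def padEnv (q : Fin k → Q) (j : ℕ) : Q :=
  if h : j < k then q ⟨j, h⟩ else B.leafState

/-- The run of `B` on a sentential form, where the parameter `y_i` is a leaf in state
`env (i - 1)` and a nonterminal `A` whose arguments are in states `q` is assumed to
reach the state `F A q`. -/
def runWith (F : N → (Fin k → Q) → Q) (env : ℕ → Q) : PTree L N → Q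
  | .leaf => B.leafState
  | .param i => env (i - 1)
  | .term a l r => B.delta a (runWith F env l) (runWith F env r)
  | .nt A ts => F A fun j => B.listEnv (ts.map (runWith F env)) j

def annotateWith (F : N → (Fin k → Q) → Q) (e : N × (Fin k → Q) → M) (env : ℕ → Q) :
    PTree L N → PTree (L × Q) M
  | .leaf => .leaf
  | .param i => .param i
  | .term a l r =>
      .term (a, B.runWith F env (.term a l r)) (annotateWith F e env l) (annotateWith F e env r)
  | .nt A ts =>
      .nt (e (A, fun j => B.listEnv (ts.map (B.runWith F env)) j))
        (ts.map (annotateWith F e env))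

/-- `F A q` is the state reached at the root of the tree derived from `A` when each
parameter `y_(j+1)` is replaced by a tree on which `B` reaches `q j`. -/
def IsSummary (G : SLT L N) (F : N → (Fin k → Q) → Q) : Prop :=
  ∀ A q, F A q = B.runWith F (B.padEnv q) (G.P A)

variable (F : N → (Fin k → Q) → Q)

theorem runWith_of_ground (env : ℕ → Q) {t : PTree L N} (ht : Ground t) :
    B.runWith F env t = B.run t := by
  induction ht with
  | leaf => simp [runWith, run]
  | term a _ _ ihl ihr => simp [runWith, run, ihl, ihr]

theorem annotateWith_of_ground (e : N × (Fin k → Q) → M) (env : ℕ → Q) {t : PTree L N}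
    (ht : Ground t) : B.annotateWith F e env t = B.annotate t := by
  induction ht with
  | leaf => simp [annotateWith, annotate]
  | term a hl hr ihl ihr =>
      simp [annotateWith, annotate, ihl, ihr, runWith, runWith_of_ground B F env hl,
        runWith_of_ground B F env hr]

theorem runWith_congr_env {env₁ env₂ : ℕ → Q} {u : PTree L N}
    (h : ∀ i ∈ u.paramList, env₁ (i - 1) = env₂ (i - 1)) :
    B.runWith F env₁ u = B.runWith F env₂ u := by
  induction u with
  | leaf => simp [runWith]
  | param i => simpa [runWith] using h
  | term a l r ihl ihr =>
      simp only [paramList_term, List.mem_append] at h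
      simp [runWith, ihl fun i hi => h i (.inl hi), ihr fun i hi => h i (.inr hi)]
  | nt A ts ih =>
      simp only [paramList_nt, List.mem_flatten, List.mem_map] at h
      have hts : ts.map (B.runWith F env₁) = ts.map (B.runWith F env₂) :=
        List.map_congr_left fun t ht => ih t ht fun i hi => h i ⟨_, ⟨t, ht, rfl⟩, hi⟩
      simp [runWith, hts]

theorem annotateWith_congr_env (e : N × (Fin k → Q) → M) {env₁ env₂ : ℕ → Q}
    {u : PTree L N} (h : ∀ i ∈ u.paramList, env₁ (i - 1) = env₂ (i - 1)) :
    B.annotateWith F e env₁ u = B.annotateWith F e env₂ u := by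
  induction u with
  | leaf => simp [annotateWith]
  | param i => simp [annotateWith]
  | term a l r ihl ihr =>
      have hrun := B.runWith_congr_env F h
      simp only [paramList_term, List.mem_append] at h
      simp only [annotateWith, hrun, ihl fun i hi => h i (.inl hi),
        ihr fun i hi => h i (.inr hi)]
  | nt A ts ih =>
      simp only [paramList_nt, List.mem_flatten, List.mem_map] at h
      have hts : ∀ t ∈ ts, ∀ i ∈ t.paramList, env₁ (i - 1) = env₂ (i - 1) :=
        fun t ht i hi => h i ⟨_, ⟨t, ht, rfl⟩, hi⟩
      have hrun : ts.map (B.runWith F env₁) = ts.map (B.runWith F env₂) :=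
        List.map_congr_left fun t ht => B.runWith_congr_env F (hts t ht)
      have hann : ts.map (B.annotateWith F e env₁) = ts.map (B.annotateWith F e env₂) :=
        List.map_congr_left fun t ht => ih t ht (hts t ht)
      simp only [annotateWith, hrun, hann]

theorem runWith_congr_occurs {F₁ F₂ : N → (Fin k → Q) → Q} (env : ℕ → Q) {u : PTree L N}
    (h : ∀ A, Occurs A u → F₁ A = F₂ A) : B.runWith F₁ env u = B.runWith F₂ env u := by
  induction u with
  | leaf => simp [runWith]
  | param i => simp [runWith]
  | term a l r ihl ihr =>
      simp [runWith, ihl fun A hA => h A (.term_left a hA),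
        ihr fun A hA => h A (.term_right a hA)]
  | nt A ts ih =>
      have hts : ts.map (B.runWith F₁ env) = ts.map (B.runWith F₂ env) :=
        List.map_congr_left fun t ht => ih t ht fun A' hA' => h A' (.nt A ht hA')
      simp [runWith, hts, h A (.here ts)]

theorem exists_isSummary [Finite N] (G : SLT L N) :
    ∃ F : N → (Fin k → Q) → Q, B.IsSummary G F := by
  classical
  let wf := G.wellFounded_occurs_s13
  refine ⟨wf.fix fun A F q => B.runWith
    (fun X => if h : Occurs X (G.P A) then F X h else fun _ => B.leafState)
    (B.padEnv q) (G.P A), fun A q => ?_⟩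
  rw [wf.fix_eq]
  exact B.runWith_congr_occurs _ fun X hX => dif_pos hX

theorem runWith_subst (env : ℕ → Q) (ts : List (PTree L N)) (u : PTree L N) :
    B.runWith F env (subst ts u) = B.runWith F (B.listEnv (ts.map (B.runWith F env))) u := by
  induction u with
  | leaf => simp [runWith]
  | param i =>
      simp only [subst_param, runWith, listEnv]
      rw [show B.leafState = B.runWith F env .leaf by simp [runWith], List.getD_map]
  | term a l r ihl ihr => simp [runWith, ihl, ihr]
  | nt A ts' ih =>
      simp only [subst_nt, runWith, List.map_map, Function.comp_def]
      rw [List.map_congr_left ih]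

theorem annotateWith_subst (e : N × (Fin k → Q) → M) (env : ℕ → Q) (ts : List (PTree L N))
    (u : PTree L N) :
    B.annotateWith F e env (subst ts u) = subst (ts.map (B.annotateWith F e env))
      (B.annotateWith F e (B.listEnv (ts.map (B.runWith F env))) u) := by
  induction u with
  | leaf => simp [annotateWith]
  | param i =>
      simp only [subst_param, annotateWith]
      rw [show (PTree.leaf : PTree (L × Q) M) = B.annotateWith F e env .leaf by
        simp [annotateWith], List.getD_map]
  | term a l r ihl ihr =>
      have hrun := B.runWith_subst F env ts (.term a l r)
      simp only [subst_term] at hrun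
      simp only [subst_term, annotateWith, ihl, ihr, hrun]
  | nt A ts' ih =>
      simp only [subst_nt, annotateWith, List.map_map, Function.comp_def]
      rw [List.map_congr_left ih, List.map_congr_left fun t _ => B.runWith_subst F env ts t]

theorem paramList_annotateWith (e : N × (Fin k → Q) → M) (env : ℕ → Q) (u : PTree L N) :
    (B.annotateWith F e env u).paramList = u.paramList := by
  induction u with
  | leaf => simp [annotateWith]
  | param i => simp [annotateWith]
  | term a l r ihl ihr => simp [annotateWith, ihl, ihr]
  | nt A ts ih =>
      simp only [annotateWith, paramList_nt, List.map_map]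
      exact congrArg _ (List.map_congr_left ih)

theorem nodeCount_annotateWith (e : N × (Fin k → Q) → M) (env : ℕ → Q) (u : PTree L N) :
    (B.annotateWith F e env u).nodeCount = u.nodeCount := by
  induction u with
  | leaf => simp [annotateWith]
  | param i => simp [annotateWith]
  | term a l r ihl ihr => simp [annotateWith, ihl, ihr]
  | nt A ts ih =>
      simp only [annotateWith, nodeCount_nt, List.map_map]
      exact congrArg _ (congrArg _ (List.map_congr_left ih))

theorem arityOk_annotateWith {rank : N → ℕ} (e : N × (Fin k → Q) ≃ M) (env : ℕ → Q)
    {u : PTree L N} (hu : ArityOk rank u) :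
    ArityOk (fun X => rank (e.symm X).1) (B.annotateWith F e env u) := by
  induction hu with
  | leaf => simpa [annotateWith] using .leaf
  | param i => simpa [annotateWith] using .param i
  | term a _ _ ihl ihr => simpa [annotateWith] using .term _ ihl ihr
  | nt A hlen _ ih =>
      rw [annotateWith]
      refine .nt _ (by simpa using hlen) ?_
      simpa using ih

theorem occurs_annotateWith (e : N × (Fin k → Q) → M) (env : ℕ → Q) {X : M}
    {u : PTree L N} (h : Occurs X (B.annotateWith F e env u)) :
    ∃ A q, X = e (A, q) ∧ Occurs A u := by
  induction u with
  | leaf => simp [annotateWith] at h; cases h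
  | param i => simp [annotateWith] at h; cases h
  | term a l r ihl ihr =>
      rw [annotateWith] at h
      cases h with
      | term_left _ h =>
          obtain ⟨A, q, rfl, hA⟩ := ihl h
          exact ⟨A, q, rfl, .term_left a hA⟩
      | term_right _ h =>
          obtain ⟨A, q, rfl, hA⟩ := ihr h
          exact ⟨A, q, rfl, .term_right a hA⟩
  | nt A ts ih =>
      rw [annotateWith] at h
      cases h with
      | here => exact ⟨A, _, rfl, .here ts⟩
      | nt _ hmem h =>
          obtain ⟨t, ht, rfl⟩ := List.mem_map.1 hmem
          obtain ⟨A', q, rfl, hA'⟩ := ih t ht h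
          exact ⟨A', q, rfl, .nt A ht hA'⟩

variable (G : SLT L N)

def annotateGrammar (e : N × (Fin k → Q) ≃ M) : SLT (L × Q) M where
  rank X := G.rank (e.symm X).1
  start := e (G.start, fun _ => B.leafState)
  P X := B.annotateWith F e (B.padEnv (e.symm X).2) (G.P (e.symm X).1)
  rank_start := by simp [G.rank_start]
  arity _ := B.arityOk_annotateWith F e _ (G.arity _)
  params _ := by rw [paramList_annotateWith, G.params]
  acyclic X hX := by
    refine G.acyclic _ (Relation.TransGen.lift (fun X => (e.symm X).1) (fun Y Z h => ?_) X X hX)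
    obtain ⟨A, q, rfl, hA⟩ := B.occurs_annotateWith F e _ h
    simpa [Function.onFun] using hA

theorem size_annotateGrammar [Fintype N] [Fintype Q] [Fintype M] (e : N × (Fin k → Q) ≃ M) :
    (B.annotateGrammar F G e).size = Fintype.card Q ^ k * G.size := by
  simp only [SLT.size, annotateGrammar, nodeCount_annotateWith]
  rw [e.symm.sum_comp fun p => (G.P p.1).nodeCount - 1, Fintype.sum_prod_type, Finset.mul_sum]
  simp

@[simp] theorem annotateGrammar_P (e : N × (Fin k → Q) ≃ M) (A : N) (q : Fin k → Q) :
    (B.annotateGrammar F G e).P (e (A, q)) = B.annotateWith F e (B.padEnv q) (G.P A) := by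
  simp [annotateGrammar]

/-- Parameters of a right-hand side are bounded by the rank, so padding the argument
states to length `k` does not change them. -/
theorem padEnv_eq_listEnv {A : N} (hA : G.rank A ≤ k) (qs : List Q) :
    ∀ i ∈ (G.P A).paramList, B.padEnv (fun j : Fin k => B.listEnv qs j) (i - 1) =
      B.listEnv qs (i - 1) := by
  intro i hi
  rw [G.params, List.mem_range'_1] at hi
  simp [padEnv, show i - 1 < k by omega]

variable {F G}

theorem runWith_nt_eq_subst (hF : B.IsSummary G F) {A : N} (hA : G.rank A ≤ k)
    (env : ℕ → Q) (ts : List (PTree L N)) :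
    B.runWith F env (.nt A ts) = B.runWith F env (subst ts (G.P A)) := by
  rw [runWith_subst, runWith, hF]
  exact B.runWith_congr_env F (B.padEnv_eq_listEnv G hA _)

theorem runWith_eq_of_rw (hF : B.IsSummary G F) (hk : ∀ A, G.rank A ≤ k) (env : ℕ → Q)
    {s s' : PTree L N} (h : G.Rw s s') : B.runWith F env s = B.runWith F env s' := by
  induction h with
  | head A ts => exact B.runWith_nt_eq_subst hF (hk A) env ts
  | term_left a r _ ih => simp [runWith, ih]
  | term_right a l _ ih => simp [runWith, ih]
  | nt_child A u v _ ih => simp [runWith, ih]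

theorem rw_annotateWith_of_rw (hF : B.IsSummary G F) (hk : ∀ A, G.rank A ≤ k)
    (e : N × (Fin k → Q) ≃ M) (env : ℕ → Q) {s s' : PTree L N} (h : G.Rw s s') :
    (B.annotateGrammar F G e).Rw (B.annotateWith F e env s) (B.annotateWith F e env s') := by
  induction h with
  | head A ts =>
      have hstep := SLT.Rw.head (G := B.annotateGrammar F G e)
        (e (A, fun j => B.listEnv (ts.map (B.runWith F env)) j)) (ts.map (B.annotateWith F e env))
      rw [annotateGrammar_P] at hstep
      rwa [annotateWith.eq_4, annotateWith_subst,
        ← B.annotateWith_congr_env F e (B.padEnv_eq_listEnv G (hk A) _)]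
  | term_left a r h ih =>
      simp only [annotateWith, B.runWith_eq_of_rw hF hk env (.term_left a r h)]
      exact .term_left _ _ ih
  | term_right a l h ih =>
      simp only [annotateWith, B.runWith_eq_of_rw hF hk env (.term_right a l h)]
      exact .term_right _ _ ih
  | nt_child A u v h ih =>
      simp only [annotateWith, List.map_append, List.map_cons, B.runWith_eq_of_rw hF hk env h]
      exact .nt_child _ _ _ ih

theorem annotateGrammar_derives_annotate (hF : B.IsSummary G F) (hk : ∀ A, G.rank A ≤ k)
    (e : N × (Fin k → Q) ≃ M) {t : PTree L N} (ht : Ground t)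
    (h : Relation.ReflTransGen G.Rw (G.P G.start) t) :
    Relation.ReflTransGen (B.annotateGrammar F G e).Rw
      ((B.annotateGrammar F G e).P (B.annotateGrammar F G e).start) (B.annotate t) := by
  rw [← B.annotateWith_of_ground F e (B.padEnv fun _ => B.leafState) ht]
  simpa [annotateGrammar] using Relation.ReflTransGen.lift _
    (fun _ _ hs => B.rw_annotateWith_of_rw hF hk e (B.padEnv fun _ => B.leafState) hs) _ _ h

end DBU

/-- Annotation of an SLT grammar by a deterministic
bottom-up tree automaton: there is a constant `c > 0` such that for every
`k`, every deterministic bottom-up tree automaton `B` with state set `Q` and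
every `k`-SLT grammar `G` (all nonterminals of rank at most `k`) there is an
SLT grammar of size `O(|Q|^{k+1}·|G|)` deriving the tree derived by `G` with
every node annotated by the state that `B` reaches at that node in its
unique run. -/
theorem slt_bottom_up_annotation :
    ∃ c : ℕ, 0 < c ∧
      ∀ (k : ℕ) (L N Q : Type) [Fintype N] [Fintype Q]
        (B : DBU L Q) (G : SLT L N), (∀ A, G.rank A ≤ k) →
        ∃ (m : ℕ) (G' : SLT (L × Q) (Fin m)),
          SLT.size G' ≤ c * (Fintype.card Q) ^ (k + 1) * (SLT.size G + 1) ∧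
          ∀ t : PTree L N, PTree.Ground t →
            Relation.ReflTransGen (SLT.Rw G) (G.P G.start) t →
            Relation.ReflTransGen (SLT.Rw G') (G'.P G'.start)
              (DBU.annotate B t) := by
  refine ⟨1, one_pos, fun k L N Q _ _ B G hk => ?_⟩
  obtain ⟨F, hF⟩ := B.exists_isSummary (k := k) G
  let e := Fintype.equivFin (N × (Fin k → Q))
  refine ⟨_, B.annotateGrammar F G e, ?_,
    fun t ht h => B.annotateGrammar_derives_annotate hF hk e ht h⟩
  have hQ : 0 < Fintype.card Q := Fintype.card_pos_iff.2 ⟨B.leafState⟩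
  rw [B.size_annotateGrammar, one_mul]
  exact Nat.mul_le_mul (Nat.pow_le_pow_right hQ k.le_succ) G.size.le_succ
end
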